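/- For h ∈ C²(ℝ) and ρ the intrinsic gauge, the Baouendi operator acts on the radial function h(ρ) by B_α h(ρ) = ψ ( h''(ρ) + ((Q-1)/ρ) h'(ρ) ), where Q = m + (α+1)k is the homogeneous dimension and ψ = |z|^{2α}/ρ^{2α}, at every point with z ≠ 0. -/

import Mathlib

open MeasureTheory Real

noncomputable section

variable {m k : ℕ}

abbrev Pt (m k : ℕ) := EuclideanSpace ℝ (Fin m) × EuclideanSpace ℝ (Fin k)

/-- standard basis direction in the `z` variables -/
def ez (i : Fin m) : Pt m k := (EuclideanSpace.single i (1:ℝ), 0)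

/-- standard basis direction in the `t` variables -/
def et (j : Fin k) : Pt m k := (0, EuclideanSpace.single j (1:ℝ))

/-- second partial derivative in direction `v` -/
def pd2 (u : Pt m k → ℝ) (p v : Pt m k) : ℝ :=
  fderiv ℝ (fun q => fderiv ℝ u q v) p v

/-- Laplacian in the `z` variables -/
def lapz (u : Pt m k → ℝ) (p : Pt m k) : ℝ := ∑ i : Fin m, pd2 u p (ez i)

/-- Laplacian in the `t` variables -/
def lapt (u : Pt m k → ℝ) (p : Pt m k) : ℝ := ∑ j : Fin k, pd2 u p (et j)

/-- the Baouendi operator `B_α u = Δ_z u + |z|^{2α} Δ_t u` -/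
def Bop (α : ℝ) (u : Pt m k → ℝ) (p : Pt m k) : ℝ :=
  lapz u p + ‖p.1‖ ^ (2*α) * lapt u p

/-- the generator `Z = Σ z_i ∂_{z_i} + (α+1) Σ t_j ∂_{t_j}` -/
def Zop (α : ℝ) (u : Pt m k → ℝ) (p : Pt m k) : ℝ :=
  fderiv ℝ u p (p.1, (α+1) • p.2)

/-- the intrinsic gauge `ρ` -/
def rho (α : ℝ) (p : Pt m k) : ℝ :=
  (‖p.1‖ ^ (2*(α+1)) + (α+1)^2 * ‖p.2‖^2) ^ (1/(2*(α+1)))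

/-- the angle function `ψ = |z|^{2α}/ρ^{2α}` -/
def psi (α : ℝ) (p : Pt m k) : ℝ := ‖p.1‖ ^ (2*α) / rho α p ^ (2*α)

/-- `|∇_z u|²` -/
def gradzSq (u : Pt m k → ℝ) (p : Pt m k) : ℝ :=
  ∑ i : Fin m, (fderiv ℝ u p (ez i))^2

/-- `|∇_t u|²` -/
def gradtSq (u : Pt m k → ℝ) (p : Pt m k) : ℝ :=
  ∑ j : Fin k, (fderiv ℝ u p (et j))^2

/-- `|Xu|² = |∇_z u|² + |z|^{2α}|∇_t u|²` -/
def XgradSq (α : ℝ) (u : Pt m k → ℝ) (p : Pt m k) : ℝ :=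
  gradzSq u p + ‖p.1‖ ^ (2*α) * gradtSq u p

/-- anisotropic dilation `δ_λ(z,t) = (λz, λ^{α+1}t)` -/
def dil (α l : ℝ) (p : Pt m k) : Pt m k := (l • p.1, (l ^ (α+1)) • p.2)

/-- gauge ball `B_r` -/
def gball (α r : ℝ) : Set (Pt m k) := {p | rho α p < r}

/-! Since `B_α` is a sum of second directional derivatives, the one-variable chain rule gives
`B_α (h ∘ f) = h''(f) |X f|² + h'(f) B_α f`. Write `ρ = G^{1/(2(α+1))}` with
`G = |z|^{2(α+1)} + (α+1)²|t|²`. A direct computation gives `|X G|² = 4(α+1)² |z|^{2α} G` and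
`B_α G = 2(α+1)(Q + 2α) |z|^{2α}`. The chain rule then yields `|X ρ|² = ψ` and
`B_α ρ = (Q - 1) ψ / ρ`, and applying it once more to `h ∘ ρ` gives the formula. -/

open Filter Topology

section ChainRule

variable {h : ℝ → ℝ} {f : Pt m k → ℝ} {p v : Pt m k}

lemma pd2_eq_of_eventuallyEq {u w : Pt m k → ℝ} {w' : Pt m k →L[ℝ] ℝ}
    (hu : (fun q => fderiv ℝ u q v) =ᶠ[𝓝 p] w) (hw : HasFDerivAt w w' p) :
    pd2 u p v = w' v := by
  unfold pd2
  rw [hu.fderiv_eq, hw.fderiv]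

lemma XgradSq_comp {α h' : ℝ} (hh : HasDerivAt h h' (f p)) (hf : DifferentiableAt ℝ f p) :
    XgradSq α (fun q => h (f q)) p = h' ^ 2 * XgradSq α f p := by
  have hfd : fderiv ℝ (fun q => h (f q)) p = h' • fderiv ℝ f p :=
    (hh.comp_hasFDerivAt p hf.hasFDerivAt).fderiv
  simp only [XgradSq, gradzSq, gradtSq, hfd, smul_apply, smul_eq_mul, mul_pow,
    ← Finset.mul_sum]
  ring

variable {h' : ℝ → ℝ} {h'' : ℝ}

lemma pd2_comp (hh : ∀ᶠ x in 𝓝 (f p), HasDerivAt h (h' x) x) (hh' : HasDerivAt h' h'' (f p))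
    (hf : ContDiffAt ℝ 2 f p) :
    pd2 (fun q => h (f q)) p v = h'' * fderiv ℝ f p v ^ 2 + h' (f p) * pd2 f p v := by
  have hf_near : ∀ᶠ q in 𝓝 p, DifferentiableAt ℝ f q :=
    (hf.eventually (by simp)).mono fun q hq => hq.differentiableAt (by simp)
  have hfv : DifferentiableAt ℝ (fun q => fderiv ℝ f q v) p :=
    ((hf.fderiv_right (m := 1) le_rfl).differentiableAt one_ne_zero).clm_apply
      (differentiableAt_const v)
  have hfirst : (fun q => fderiv ℝ (fun q => h (f q)) q v) =ᶠ[𝓝 p]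
      fun q => h' (f q) * fderiv ℝ f q v := by
    filter_upwards [hf_near, hf.continuousAt.tendsto.eventually hh] with q hfq hhq
    have hd : HasFDerivAt (fun q => h (f q)) (h' (f q) • fderiv ℝ f q) q :=
      hhq.comp_hasFDerivAt q hfq.hasFDerivAt
    simp [hd.fderiv]
  rw [pd2_eq_of_eventuallyEq hfirst
    ((hh'.comp_hasFDerivAt p (hf.differentiableAt (by simp)).hasFDerivAt).mul hfv.hasFDerivAt)]
  simp only [Function.comp_apply, add_apply, smul_apply, smul_eq_mul, pd2]
  ring

lemma Bop_comp {α : ℝ} (hh : ∀ᶠ x in 𝓝 (f p), HasDerivAt h (h' x) x)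
    (hh' : HasDerivAt h' h'' (f p)) (hf : ContDiffAt ℝ 2 f p) :
    Bop α (fun q => h (f q)) p = h'' * XgradSq α f p + h' (f p) * Bop α f p := by
  simp only [Bop, lapz, lapt, XgradSq, gradzSq, gradtSq, pd2_comp hh hh' hf,
    Finset.sum_add_distrib, ← Finset.mul_sum]
  ring

end ChainRule

lemma hasFDerivAt_norm_rpow_of_ne_zero {E : Type*} [NormedAddCommGroup E] [InnerProductSpace ℝ E]
    {x : E} (hx : x ≠ 0) (β : ℝ) :
    HasFDerivAt (fun y : E => ‖y‖ ^ β) ((β * ‖x‖ ^ (β - 2)) • innerSL ℝ x) x := by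
  have hsq : (fun y : E => ‖y‖ ^ β) = fun y => (‖y‖ ^ 2) ^ (β / 2) := by
    ext y
    rw [← Real.rpow_natCast, ← Real.rpow_mul (norm_nonneg y)]
    ring_nf
  rw [hsq]
  convert (hasStrictFDerivAt_norm_sq x).hasFDerivAt.rpow_const (p := β / 2)
    (Or.inl (by positivity)) using 1
  rw [← Real.rpow_natCast, ← Real.rpow_mul (norm_nonneg x), ← Nat.cast_smul_eq_nsmul ℝ, smul_smul]
  ring_nf

section Gauge

variable {α : ℝ} {p : Pt m k}

def rhoPow (α : ℝ) (q : Pt m k) : ℝ := ‖q.1‖ ^ (2 * (α + 1)) + (α + 1) ^ 2 * ‖q.2‖ ^ 2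

lemma rho_eq_rhoPow_rpow : rho α = fun q : Pt m k => rhoPow α q ^ (1 / (2 * (α + 1))) := rfl

lemma rho_eq_rhoPow_rpow_apply (q : Pt m k) :
    rho α q = rhoPow α q ^ (1 / (2 * (α + 1))) := rfl

lemma rhoPow_pos (hz : p.1 ≠ 0) : 0 < rhoPow α p := by
  have : 0 < ‖p.1‖ := norm_pos_iff.mpr hz
  unfold rhoPow
  positivity

lemma contDiffAt_rhoPow (hz : p.1 ≠ 0) : ContDiffAt ℝ 2 (rhoPow α) p :=
  (((contDiffAt_norm ℝ hz).comp p contDiffAt_fst).rpow_const_of_ne (norm_ne_zero_iff.mpr hz)).add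
    (contDiffAt_const.mul ((contDiff_norm_sq ℝ).comp contDiff_snd).contDiffAt)

lemma hasFDerivAt_rhoPow (hz : p.1 ≠ 0) :
    HasFDerivAt (rhoPow α)
      ((2 * (α + 1) * ‖p.1‖ ^ (2 * α)) • (innerSL ℝ p.1).comp (.fst ℝ _ _)
        + (2 * (α + 1) ^ 2) • (innerSL ℝ p.2).comp (.snd ℝ _ _)) p := by
  have hz' := (hasFDerivAt_norm_rpow_of_ne_zero hz (2 * (α + 1))).comp p hasFDerivAt_fst
  have ht := ((hasStrictFDerivAt_norm_sq p.2).hasFDerivAt.comp p hasFDerivAt_snd).const_mul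
    ((α + 1) ^ 2)
  rw [show 2 * (α + 1) - 2 = 2 * α by ring] at hz'
  refine (hz'.add ht).congr_fderiv ?_
  ext v
  · simp
  · simp [← mul_assoc, mul_comm _ (2 : ℝ)]

lemma fderiv_rhoPow_ez (hz : p.1 ≠ 0) (i : Fin m) :
    fderiv ℝ (rhoPow α) p (ez i) = 2 * (α + 1) * ‖p.1‖ ^ (2 * α) * p.1 i := by
  simp [(hasFDerivAt_rhoPow hz).fderiv, ez, EuclideanSpace.inner_single_right]

lemma fderiv_rhoPow_et (hz : p.1 ≠ 0) (j : Fin k) :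
    fderiv ℝ (rhoPow α) p (et j) = 2 * (α + 1) ^ 2 * p.2 j := by
  simp [(hasFDerivAt_rhoPow hz).fderiv, et, EuclideanSpace.inner_single_right]

lemma pd2_rhoPow_ez (hz : p.1 ≠ 0) (i : Fin m) :
    pd2 (rhoPow α) p (ez i) =
      2 * (α + 1) * (‖p.1‖ ^ (2 * α) + 2 * α * ‖p.1‖ ^ (2 * α - 2) * p.1 i ^ 2) := by
  have hnear : (fun q => fderiv ℝ (rhoPow α) q (ez i)) =ᶠ[𝓝 p]
      fun q => 2 * (α + 1) * ‖q.1‖ ^ (2 * α) * q.1 i :=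
    (continuous_fst.continuousAt.eventually_ne hz).mono fun q hq => fderiv_rhoPow_ez hq i
  have hzi : HasFDerivAt (fun q : Pt m k => q.1 i) _ p :=
    ((EuclideanSpace.proj (𝕜 := ℝ) i).comp (.fst ℝ _ (EuclideanSpace ℝ (Fin k)))).hasFDerivAt
  have hw := (((hasFDerivAt_norm_rpow_of_ne_zero hz (2 * α)).comp p hasFDerivAt_fst).const_mul
      (2 * (α + 1))).mul hzi
  rw [pd2_eq_of_eventuallyEq hnear hw]
  simp only [Function.comp_apply, ContinuousLinearMap.smul_comp, ez, add_apply, smul_apply,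
    ContinuousLinearMap.comp_apply, ContinuousLinearMap.coe_fst', PiLp.proj_apply,
    PiLp.single_eq_same, smul_eq_mul, mul_one, coe_innerSL_apply,
    EuclideanSpace.inner_single_right, ringHom_apply, one_mul]
  ring

lemma pd2_rhoPow_et (hz : p.1 ≠ 0) (j : Fin k) :
    pd2 (rhoPow α) p (et j) = 2 * (α + 1) ^ 2 := by
  have hnear : (fun q => fderiv ℝ (rhoPow α) q (et j)) =ᶠ[𝓝 p]
      fun q => 2 * (α + 1) ^ 2 * q.2 j :=
    (continuous_fst.continuousAt.eventually_ne hz).mono fun q hq => fderiv_rhoPow_et hq j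
  have htj : HasFDerivAt (fun q : Pt m k => q.2 j) _ p :=
    ((EuclideanSpace.proj (𝕜 := ℝ) j).comp (.snd ℝ (EuclideanSpace ℝ (Fin m)) _)).hasFDerivAt
  have hw := htj.const_mul (2 * (α + 1) ^ 2)
  rw [pd2_eq_of_eventuallyEq hnear hw]
  simp [et]

lemma XgradSq_rhoPow (hz : p.1 ≠ 0) :
    XgradSq α (rhoPow α) p = 4 * (α + 1) ^ 2 * ‖p.1‖ ^ (2 * α) * rhoPow α p := by
  have hpos : 0 < ‖p.1‖ := norm_pos_iff.mpr hz
  simp only [XgradSq, gradzSq, gradtSq, fderiv_rhoPow_ez hz, fderiv_rhoPow_et hz, mul_pow,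
    ← Finset.mul_sum, ← EuclideanSpace.real_norm_sq_eq, rhoPow]
  rw [show 2 * (α + 1) = 2 * α + 2 by ring, Real.rpow_add hpos, Real.rpow_two]
  ring

lemma Bop_rhoPow (hz : p.1 ≠ 0) :
    Bop α (rhoPow α) p = 2 * (α + 1) * (m + 2 * α + (α + 1) * k) * ‖p.1‖ ^ (2 * α) := by
  have hpos : 0 < ‖p.1‖ := norm_pos_iff.mpr hz
  simp only [Bop, lapz, lapt, pd2_rhoPow_ez hz, pd2_rhoPow_et hz, mul_add, Finset.sum_add_distrib,
    ← Finset.mul_sum, ← EuclideanSpace.real_norm_sq_eq, Finset.sum_const, Finset.card_univ,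
    Fintype.card_fin, nsmul_eq_mul]
  rw [Real.rpow_sub hpos, Real.rpow_two]
  field_simp

lemma rho_pos (hz : p.1 ≠ 0) : 0 < rho α p :=
  Real.rpow_pos_of_pos (rhoPow_pos hz) _

lemma contDiffAt_rho (hz : p.1 ≠ 0) : ContDiffAt ℝ 2 (rho α) p :=
  (contDiffAt_rhoPow hz).rpow_const_of_ne (rhoPow_pos hz).ne'

lemma rhoPow_eq_rho_rpow_mul_sq (hα : α + 1 ≠ 0) (hz : p.1 ≠ 0) :
    rhoPow α p = rho α p ^ (2 * α) * rho α p ^ 2 := by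
  rw [← Real.rpow_two, ← Real.rpow_add (rho_pos hz), show 2 * α + 2 = 2 * (α + 1) by ring]
  rw [rho_eq_rhoPow_rpow_apply, ← Real.rpow_mul (rhoPow_pos hz).le, one_div_mul_cancel (by simpa),
    Real.rpow_one]

lemma XgradSq_rho (hα : α + 1 ≠ 0) (hz : p.1 ≠ 0) : XgradSq α (rho α) p = psi α p := by
  have hG := rhoPow_pos (α := α) hz
  rw [rho_eq_rhoPow_rpow, XgradSq_comp (Real.hasDerivAt_rpow_const (Or.inl hG.ne'))
    ((contDiffAt_rhoPow hz).differentiableAt (by simp)), XgradSq_rhoPow hz,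
    Real.rpow_sub_one hG.ne', ← rho_eq_rhoPow_rpow_apply, rhoPow_eq_rho_rpow_mul_sq hα hz, psi]
  have := rho_pos (α := α) hz
  field_simp
  ring

lemma Bop_rho (hα : α + 1 ≠ 0) (hz : p.1 ≠ 0) :
    Bop α (rho α) p = (m + (α + 1) * k - 1) / rho α p * psi α p := by
  have hG := rhoPow_pos (α := α) hz
  have hrpow : ∀ᶠ x in 𝓝 (rhoPow α p),
      HasDerivAt (fun x => x ^ (1 / (2 * (α + 1))))
        (1 / (2 * (α + 1)) * x ^ (1 / (2 * (α + 1)) - 1)) x :=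
    (eventually_ne_nhds hG.ne').mono fun x hx => Real.hasDerivAt_rpow_const (Or.inl hx)
  rw [rho_eq_rhoPow_rpow, Bop_comp hrpow
    ((Real.hasDerivAt_rpow_const (Or.inl hG.ne')).const_mul _) (contDiffAt_rhoPow hz)]
  beta_reduce
  rw [XgradSq_rhoPow hz, Bop_rhoPow hz, Real.rpow_sub_one hG.ne', Real.rpow_sub_one hG.ne',
    ← rho_eq_rhoPow_rpow_apply, rhoPow_eq_rho_rpow_mul_sq hα hz, psi]
  have := rho_pos (α := α) hz
  field_simp
  ring

end Gauge

theorem baouendi_on_radial (m k : ℕ) (α : ℝ) (hα : 0 < α)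
    (h : ℝ → ℝ) (hh : ContDiff ℝ 2 h) (p : Pt m k) (hz : p.1 ≠ 0) :
    Bop α (fun q => h (rho α q)) p =
      psi α p * (deriv (deriv h) (rho α p)
        + (((m : ℝ) + (α+1)*k - 1) / rho α p) * deriv h (rho α p)) := by
  have hα' : α + 1 ≠ 0 := by positivity
  have hh' : HasDerivAt (deriv h) (deriv (deriv h) (rho α p)) (rho α p) :=
    ((hh.deriv' (n := 1)).differentiable one_ne_zero _).hasDerivAt
  rw [Bop_comp (.of_forall fun x => (hh.differentiable two_ne_zero x).hasDerivAt) hh'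
    (contDiffAt_rho hz), XgradSq_rho hα' hz, Bop_rho hα' hz]
  ring
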